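/- arXiv:2309.02597 — 2 statements merged into one kernel-verified Lean document; each statement's English description precedes it below -/
import Mathlib

section
/- Let $(A_0,A_1)$ be a compatible pair of normed spaces, $B$ a normed space, $T$ linear with $T: A_0 \to B$ of norm $\|T\|_0 > 0$ and $T: A_1 \to B$ of norm $\|T\|_1$. Let $p > 0$ and let $\rho$ be a non-negative measurable function supported in $(0, \|T\|_1/\|T\|_0)$ with $\int_0^\infty \rho(t)\,dt = 1$. Then for every $f \in A_0 + A_1$, $\|Tf\|_B \le \|T\|_1 \left(\int_0^{\|T\|_1/\|T\|_0} \left(\frac{K(t,f;A_0,A_1)}{t}\right)^p \rho(t)\,dt\right)^{1/p}$. -/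
open MeasureTheory

/-
For `0 < t ≤ C₁ / C₀` every decomposition `f = a₀ + a₁` gives
`‖T f‖ ≤ C₀ ‖a₀‖ + C₁ ‖a₁‖ ≤ (C₁ / t) (‖a₀‖ + t ‖a₁‖)`, hence `‖T f‖ / C₁ ≤ K(t, f) / t`
on the support of `ρ`. Raising to the power `p` and averaging against the probability
density `ρ` gives the inequality.
-/

/-- The Peetre `K`-functional of a compatible pair of normed spaces `(A₀, A₁)`,
modelled by two normed spaces `E0`, `E1` mapped additively into a common ambient
group `X`. -/
noncomputable def Kpair {X E0 E1 : Type*} [AddCommGroup X]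
    [NormedAddCommGroup E0] [NormedAddCommGroup E1]
    (i0 : E0 →+ X) (i1 : E1 →+ X) (t : ℝ) (x : X) : ℝ :=
  sInf {r : ℝ | ∃ (a0 : E0) (a1 : E1), i0 a0 + i1 a1 = x ∧ r = ‖a0‖ + t * ‖a1‖}

section Kpair

variable {X E0 E1 : Type*} [AddCommGroup X] [NormedAddCommGroup E0] [NormedAddCommGroup E1]
  {i0 : E0 →+ X} {i1 : E1 →+ X}

lemma le_Kpair {t c : ℝ} {x : X} (hx : ∃ (a0 : E0) (a1 : E1), i0 a0 + i1 a1 = x)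
    (h : ∀ (a0 : E0) (a1 : E1), i0 a0 + i1 a1 = x → c ≤ ‖a0‖ + t * ‖a1‖) :
    c ≤ Kpair i0 i1 t x := by
  obtain ⟨a0, a1, hsum⟩ := hx
  refine le_csInf ⟨_, a0, a1, hsum, rfl⟩ ?_
  rintro r ⟨b0, b1, hb, rfl⟩
  exact h b0 b1 hb

lemma norm_map_le_mul_Kpair {B : Type*} [NormedAddCommGroup B] (T : X →+ B) {C0 C1 M t : ℝ}
    (hT0 : ∀ a : E0, ‖T (i0 a)‖ ≤ C0 * ‖a‖) (hT1 : ∀ a : E1, ‖T (i1 a)‖ ≤ C1 * ‖a‖)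
    (hM : 0 < M) (hC0M : C0 ≤ M) (hC1M : C1 ≤ M * t) {x : X}
    (hx : ∃ (a0 : E0) (a1 : E1), i0 a0 + i1 a1 = x) :
    ‖T x‖ ≤ M * Kpair i0 i1 t x := by
  rw [← div_le_iff₀' hM]
  refine le_Kpair hx fun a0 a1 hsum => (div_le_iff₀' hM).2 ?_
  calc ‖T x‖ = ‖T (i0 a0) + T (i1 a1)‖ := by rw [← map_add, hsum]
    _ ≤ C0 * ‖a0‖ + C1 * ‖a1‖ := (norm_add_le _ _).trans (add_le_add (hT0 a0) (hT1 a1))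
    _ ≤ M * ‖a0‖ + (M * t) * ‖a1‖ := by gcongr
    _ = M * (‖a0‖ + t * ‖a1‖) := by ring

lemma norm_map_div_le_Kpair_div {B : Type*} [NormedAddCommGroup B] (T : X →+ B) {C0 C1 t : ℝ}
    (hT0 : ∀ a : E0, ‖T (i0 a)‖ ≤ C0 * ‖a‖) (hT1 : ∀ a : E1, ‖T (i1 a)‖ ≤ C1 * ‖a‖)
    (hC1 : 0 < C1) (ht : 0 < t) (htC : C0 * t ≤ C1) {x : X}
    (hx : ∃ (a0 : E0) (a1 : E1), i0 a0 + i1 a1 = x) :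
    ‖T x‖ / C1 ≤ Kpair i0 i1 t x / t := by
  have hTx := norm_map_le_mul_Kpair T hT0 hT1 (div_pos hC1 ht) ((le_div_iff₀ ht).2 htC)
    (div_mul_cancel₀ _ ht.ne').ge hx
  rw [div_le_div_iff₀ hC1 ht]
  calc ‖T x‖ * t ≤ C1 / t * Kpair i0 i1 t x * t := by gcongr
    _ = Kpair i0 i1 t x * C1 := by field_simp

end Kpair

lemma ofReal_le_lintegral_rpow_mul_rpow_inv {α : Type*} [MeasurableSpace α] {μ : Measure α}
    {ρ g : α → ℝ} {c p : ℝ} (hc : 0 ≤ c) (hp : 0 < p) (hρnn : ∀ t, 0 ≤ ρ t)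
    (hρint : ∫ t, ρ t ∂μ = 1) (hcg : ∀ t, ρ t ≠ 0 → c ≤ g t) :
    ENNReal.ofReal c ≤ (∫⁻ t, ENNReal.ofReal (g t ^ p * ρ t) ∂μ) ^ (1 / p) := by
  have hρ : ∫⁻ t, ENNReal.ofReal (ρ t) ∂μ = 1 := by
    rw [← ofReal_integral_eq_lintegral_ofReal (Integrable.of_integral_ne_zero (by simp [hρint]))
      (Filter.Eventually.of_forall hρnn), hρint, ENNReal.ofReal_one]
  have hmono : ENNReal.ofReal (c ^ p) ≤ ∫⁻ t, ENNReal.ofReal (g t ^ p * ρ t) ∂μ :=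
    calc ENNReal.ofReal (c ^ p) = ∫⁻ t, ENNReal.ofReal (c ^ p * ρ t) ∂μ := by
          simp_rw [ENNReal.ofReal_mul (Real.rpow_nonneg hc p)]
          rw [lintegral_const_mul' _ _ ENNReal.ofReal_ne_top, hρ, mul_one]
      _ ≤ ∫⁻ t, ENNReal.ofReal (g t ^ p * ρ t) ∂μ := by
          refine lintegral_mono fun t => ENNReal.ofReal_le_ofReal ?_
          by_cases ht : ρ t = 0
          · simp [ht]
          · exact mul_le_mul_of_nonneg_right
              (Real.rpow_le_rpow hc (hcg t ht) hp.le) (hρnn t)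
  calc ENNReal.ofReal c = ENNReal.ofReal (c ^ p) ^ (1 / p) := by
        rw [ENNReal.ofReal_rpow_of_nonneg (Real.rpow_nonneg hc p) (by positivity), one_div,
          Real.rpow_rpow_inv hc hp.ne']
    _ ≤ _ := ENNReal.rpow_le_rpow hmono (by positivity)

theorem stmt3_general {X E0 E1 B : Type*} [AddCommGroup X]
    [NormedAddCommGroup E0] [NormedAddCommGroup E1] [NormedAddCommGroup B]
    (i0 : E0 →+ X) (i1 : E1 →+ X) (T : X →+ B) (C0 C1 : ℝ)
    (hC0 : 0 < C0)
    (hT0 : ∀ a : E0, ‖T (i0 a)‖ ≤ C0 * ‖a‖)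
    (hT1 : ∀ a : E1, ‖T (i1 a)‖ ≤ C1 * ‖a‖)
    (p : ℝ) (hp : 0 < p)
    (ρ : ℝ → ℝ) (hρnn : ∀ t, 0 ≤ ρ t)
    (hρsupp : Function.support ρ ⊆ Set.Ioo 0 (C1 / C0))
    (hρint : ∫ t in Set.Ioi (0 : ℝ), ρ t = 1)
    (f : X) (hf : ∃ (a0 : E0) (a1 : E1), i0 a0 + i1 a1 = f) :
    ENNReal.ofReal ‖T f‖ ≤ ENNReal.ofReal C1 *
      (∫⁻ t in Set.Ioo (0 : ℝ) (C1 / C0),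
        ENNReal.ofReal ((Kpair i0 i1 t f / t) ^ p * ρ t)) ^ (1 / p) := by
  have hvanish {s : Set ℝ} (hs : Set.Ioo 0 (C1 / C0) ⊆ s) (t : ℝ) (ht : t ∉ s) : ρ t = 0 :=
    Function.notMem_support.1 fun h => ht (hs (hρsupp h))
  have hρint' : ∫ t in Set.Ioo 0 (C1 / C0), ρ t = 1 := by
    rw [setIntegral_eq_integral_of_forall_compl_eq_zero (hvanish le_rfl), ← hρint,
      setIntegral_eq_integral_of_forall_compl_eq_zero (hvanish Set.Ioo_subset_Ioi_self)]
  obtain ⟨t₀, ht₀⟩ : (Function.support ρ).Nonempty := by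
    rw [Function.support_nonempty_iff]
    rintro rfl
    simp at hρint
  have hC1 : 0 < C1 := (div_pos_iff_of_pos_right hC0).1 ((hρsupp ht₀).1.trans (hρsupp ht₀).2)
  have hbound (t : ℝ) (ht : ρ t ≠ 0) : ‖T f‖ / C1 ≤ Kpair i0 i1 t f / t :=
    have ⟨ht0, htC⟩ := hρsupp ht
    norm_map_div_le_Kpair_div T hT0 hT1 hC1 ht0 ((lt_div_iff₀' hC0).1 htC).le hf
  calc ENNReal.ofReal ‖T f‖ = ENNReal.ofReal C1 * ENNReal.ofReal (‖T f‖ / C1) := by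
        rw [← ENNReal.ofReal_mul hC1.le, mul_div_cancel₀ _ hC1.ne']
    _ ≤ _ := by
        gcongr
        exact ofReal_le_lintegral_rpow_mul_rpow_inv (by positivity) hp hρnn hρint' hbound

/-- Theorem 1.1 of the paper: the self-improving inequality via `K`-functionals. -/
theorem stmt3 {X E0 E1 B : Type*} [AddCommGroup X]
    [NormedAddCommGroup E0] [NormedAddCommGroup E1] [NormedAddCommGroup B]
    (i0 : E0 →+ X) (i1 : E1 →+ X) (T : X →+ B) (C0 C1 : ℝ)
    (hC0 : 0 < C0) (hC1 : 0 ≤ C1)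
    (hT0 : ∀ a : E0, ‖T (i0 a)‖ ≤ C0 * ‖a‖)
    (hT1 : ∀ a : E1, ‖T (i1 a)‖ ≤ C1 * ‖a‖)
    (p : ℝ) (hp : 0 < p)
    (ρ : ℝ → ℝ) (hρmeas : Measurable ρ) (hρnn : ∀ t, 0 ≤ ρ t)
    (hρsupp : Function.support ρ ⊆ Set.Ioo 0 (C1 / C0))
    (hρint : ∫ t in Set.Ioi (0 : ℝ), ρ t = 1)
    (f : X) (hf : ∃ (a0 : E0) (a1 : E1), i0 a0 + i1 a1 = f) :
    ENNReal.ofReal ‖T f‖ ≤ ENNReal.ofReal C1 *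
      (∫⁻ t in Set.Ioo (0 : ℝ) (C1 / C0),
        ENNReal.ofReal ((Kpair i0 i1 t f / t) ^ p * ρ t)) ^ (1 / p) :=
  stmt3_general i0 i1 T C0 C1 hC0 hT0 hT1 p hp ρ hρnn hρsupp hρint f hf
end

section
/- Let $p \in (0,\infty)$ and let $\{\rho_\varepsilon\}_{\varepsilon>0}$ be non-negative measurable functions on $(0,\infty)$ with $\lim_{\varepsilon\to 0^+}\int_0^a \rho_\varepsilon(t)\,dt = 1$ for every $a \in (0,1)$. Let $g:(0,\infty)\to[0,\infty)$ satisfy $\lim_{t\to 0^+} g(t)/t = \infty$. Then $\lim_{\varepsilon\to 0^+}\int_0^\infty (g(t)/t)^p \rho_\varepsilon(t)\,dt = \infty$. -/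
open MeasureTheory Filter Topology

/- Since `p > 0`, the weight `w t = (g t / t) ^ p` blows up at `0⁺`. Given `M`, pick `a` with
`w ≥ M` on `(0, a)`; the mass of `ρ ε` on `(0, a)` is eventually above `1/2`, so the weighted
integral eventually exceeds `M / 2`. -/

theorem ofReal_setIntegral_le_setLIntegral_ofReal {α : Type*} [MeasurableSpace α]
    {μ : Measure α} {s : Set α} (hs : MeasurableSet s) {f : α → ℝ} (hf : ∀ x ∈ s, 0 ≤ f x) :
    ENNReal.ofReal (∫ x in s, f x ∂μ) ≤ ∫⁻ x in s, ENNReal.ofReal (f x) ∂μ :=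
  calc ENNReal.ofReal (∫ x in s, f x ∂μ)
      ≤ ‖∫ x in s, f x ∂μ‖ₑ := Real.ofReal_le_enorm _
    _ ≤ ∫⁻ x in s, ‖f x‖ₑ ∂μ := enorm_integral_le_lintegral_enorm _
    _ = ∫⁻ x in s, ENNReal.ofReal (f x) ∂μ :=
        setLIntegral_congr_fun hs fun x hx => Real.enorm_eq_ofReal (hf x hx)

theorem ofReal_mul_setIntegral_le_setLIntegral_ofReal_mul {α : Type*} [MeasurableSpace α]
    {μ : Measure α} {s t : Set α} (hs : MeasurableSet s) (hst : s ⊆ t) {ρ w : α → ℝ}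
    (hρ : ∀ x ∈ s, 0 ≤ ρ x) {M : ℝ} (hM : 0 ≤ M) (hw : ∀ x ∈ s, M ≤ w x) :
    ENNReal.ofReal (M * ∫ x in s, ρ x ∂μ) ≤ ∫⁻ x in t, ENNReal.ofReal (w x * ρ x) ∂μ := by
  rw [← integral_const_mul]
  calc ENNReal.ofReal (∫ x in s, M * ρ x ∂μ)
      ≤ ∫⁻ x in s, ENNReal.ofReal (M * ρ x) ∂μ :=
        ofReal_setIntegral_le_setLIntegral_ofReal hs fun x hx => mul_nonneg hM (hρ x hx)
    _ ≤ ∫⁻ x in s, ENNReal.ofReal (w x * ρ x) ∂μ :=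
        setLIntegral_mono' hs fun x hx =>
          ENNReal.ofReal_le_ofReal (mul_le_mul_of_nonneg_right (hw x hx) (hρ x hx))
    _ ≤ ∫⁻ x in t, ENNReal.ofReal (w x * ρ x) ∂μ := lintegral_mono_set hst

theorem tendsto_setLIntegral_mul_atTop_of_tendsto_setIntegral {ι : Type*} {l : Filter ι}
    {ρ : ι → ℝ → ℝ} (hρ : ∀ᶠ ε in l, ∀ t, 0 ≤ ρ ε t)
    (hρlim : ∀ a ∈ Set.Ioo (0 : ℝ) 1, Tendsto (fun ε => ∫ t in Set.Ioo 0 a, ρ ε t) l (𝓝 1))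
    {w : ℝ → ℝ} (hw : Tendsto w (𝓝[>] 0) atTop) :
    Tendsto (fun ε => ∫⁻ t in Set.Ioi 0, ENNReal.ofReal (w t * ρ ε t)) l (𝓝 ⊤) := by
  rw [ENNReal.tendsto_nhds_top_iff_nat]
  intro n
  obtain ⟨a, ⟨ha0, ha1⟩, hwa⟩ :=
    (mem_nhdsGT_iff_exists_mem_Ioc_Ioo_subset one_half_pos).1
      (hw.eventually_ge_atTop (2 * (n + 1)))
  have hmass : ∀ᶠ ε in l, 1 / 2 < ∫ t in Set.Ioo 0 a, ρ ε t :=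
    (hρlim a ⟨ha0, ha1.trans_lt one_half_lt_one⟩).eventually (eventually_gt_nhds one_half_lt_one)
  filter_upwards [hρ, hmass] with ε hρε hε
  calc (n : ENNReal) = ENNReal.ofReal n := (ENNReal.ofReal_natCast n).symm
    _ < ENNReal.ofReal (2 * (n + 1) * ∫ t in Set.Ioo 0 a, ρ ε t) :=
        (ENNReal.ofReal_lt_ofReal_iff (by positivity)).2 (by nlinarith)
    _ ≤ _ := ofReal_mul_setIntegral_le_setLIntegral_ofReal_mul measurableSet_Ioo
        Set.Ioo_subset_Ioi_self (fun t _ => hρε t) (by positivity) hwa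

theorem stmt6_general (p : ℝ) (hp : 0 < p) (ρ : ℝ → ℝ → ℝ)
    (hρnn : ∀ ε > (0 : ℝ), ∀ t, 0 ≤ ρ ε t)
    (hρlim : ∀ a ∈ Set.Ioo (0 : ℝ) 1,
      Tendsto (fun ε => ∫ t in Set.Ioo (0 : ℝ) a, ρ ε t) (𝓝[>] (0 : ℝ)) (𝓝 1))
    (g : ℝ → ℝ)
    (hL : Tendsto (fun t => g t / t) (𝓝[>] (0 : ℝ)) atTop) :
    Tendsto (fun ε => ∫⁻ t in Set.Ioi (0 : ℝ), ENNReal.ofReal ((g t / t) ^ p * ρ ε t))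
      (𝓝[>] (0 : ℝ)) (𝓝 ⊤) :=
  tendsto_setLIntegral_mul_atTop_of_tendsto_setIntegral
    (eventually_nhdsWithin_of_forall hρnn) hρlim ((tendsto_rpow_atTop hp).comp hL)

/-- Lemma 2.2(i) of the paper (infinite-limit case). -/
theorem stmt6 (p : ℝ) (hp : 0 < p) (ρ : ℝ → ℝ → ℝ)
    (hρnn : ∀ ε > (0 : ℝ), ∀ t, 0 ≤ ρ ε t)
    (hρlim : ∀ a ∈ Set.Ioo (0 : ℝ) 1,
      Tendsto (fun ε => ∫ t in Set.Ioo (0 : ℝ) a, ρ ε t) (𝓝[>] (0 : ℝ)) (𝓝 1))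
    (g : ℝ → ℝ) (hgnn : ∀ t > (0 : ℝ), 0 ≤ g t)
    (hL : Tendsto (fun t => g t / t) (𝓝[>] (0 : ℝ)) atTop) :
    Tendsto (fun ε => ∫⁻ t in Set.Ioi (0 : ℝ), ENNReal.ofReal ((g t / t) ^ p * ρ ε t))
      (𝓝[>] (0 : ℝ)) (𝓝 ⊤) :=
  stmt6_general p hp ρ hρnn hρlim g hL
end
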